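/- Let J : ℝ → ℝ be a nonnegative, even, integrable function with ∫ J = 1 and all exponential moments finite. For κ > 0 let c_κ = inf_{λ>0} (1/λ)(∫ J(y) e^{λy} dy − 1 + κ). Then c_κ → 0 as κ → 0⁺. -/

import Mathlib

open MeasureTheory Real Set Filter

/-!
For an even kernel the exponential moment `∫ J(y) e^{λy} dy` equals `∫ J(y) cosh(λy) dy`.
Since `cosh (a t) - 1 ≤ a² (cosh t - 1)` for `|a| ≤ 1` (convexity of `sinh` on `[0, ∞)`), this moment
is at least `1` and at most `1 + λ² C` for `λ ≤ 1`, with `C = ∫ J(y) (cosh y - 1) dy`. Taking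
`λ = √κ` in the infimum gives `0 ≤ c_κ ≤ (C + 1) √κ`.
-/

namespace Real

lemma convexOn_sinh_Ici : ConvexOn ℝ (Ici 0) sinh := by
  refine MonotoneOn.convexOn_of_deriv (convex_Ici 0) continuous_sinh.continuousOn
    differentiable_sinh.differentiableOn ?_
  rw [interior_Ici, deriv_sinh]
  exact cosh_strictMonoOn.monotoneOn.mono Ioi_subset_Ici_self

lemma sinh_mul_le_mul_sinh {a s : ℝ} (ha₀ : 0 ≤ a) (ha₁ : a ≤ 1) (hs : 0 ≤ s) :
    sinh (a * s) ≤ a * sinh s := by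
  simpa using convexOn_sinh_Ici.2 (mem_Ici.2 hs) (mem_Ici.2 le_rfl) ha₀ (sub_nonneg.2 ha₁)
    (add_sub_cancel a 1)

lemma cosh_sub_one_eq_two_mul_sinh_sq (x : ℝ) : cosh x - 1 = 2 * sinh (x / 2) ^ 2 := by
  conv_lhs => rw [← mul_div_cancel₀ x two_ne_zero, cosh_two_mul, cosh_sq]
  ring

lemma cosh_mul_sub_one_le {a : ℝ} (ha : |a| ≤ 1) (t : ℝ) :
    cosh (a * t) - 1 ≤ a ^ 2 * (cosh t - 1) := by
  rw [← cosh_abs, abs_mul, ← cosh_abs t, ← sq_abs a, cosh_sub_one_eq_two_mul_sinh_sq,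
    cosh_sub_one_eq_two_mul_sinh_sq, mul_div_assoc]
  have hs : 0 ≤ |t| / 2 := by positivity
  have h₀ : 0 ≤ sinh (|a| * (|t| / 2)) := sinh_nonneg_iff.2 (by positivity)
  have h₁ := sinh_mul_le_mul_sinh (abs_nonneg a) ha hs
  nlinarith

lemma mul_cosh_eq (a x : ℝ) : a * cosh x = (a * exp x + a * exp (-x)) / 2 := by
  rw [cosh_eq]
  ring

end Real

section Kernel

variable {J : ℝ → ℝ}

lemma integral_mul_exp_neg_of_even (hJeven : ∀ x, J (-x) = J x) (l : ℝ) :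
    ∫ x, J x * exp (-(l * x)) = ∫ x, J x * exp (l * x) := by
  rw [← integral_neg_eq_self]
  simp only [hJeven, mul_neg, neg_neg]

lemma MeasureTheory.Integrable.mul_exp_neg_of_even (hJeven : ∀ x, J (-x) = J x) {l : ℝ}
    (h : Integrable fun x => J x * exp (l * x)) :
    Integrable fun x => J x * exp (-(l * x)) :=
  h.comp_neg.congr (Eventually.of_forall fun x => by simp only [hJeven, mul_neg])

lemma MeasureTheory.Integrable.mul_cosh_of_even (hJeven : ∀ x, J (-x) = J x) {l : ℝ}
    (h : Integrable fun x => J x * exp (l * x)) :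
    Integrable fun x => J x * cosh (l * x) := by
  simp only [mul_cosh_eq]
  exact (h.add (h.mul_exp_neg_of_even hJeven)).div_const 2

lemma integral_mul_exp_eq_integral_mul_cosh (hJeven : ∀ x, J (-x) = J x) {l : ℝ}
    (h : Integrable fun x => J x * exp (l * x)) :
    ∫ x, J x * exp (l * x) = ∫ x, J x * cosh (l * x) := by
  simp only [mul_cosh_eq]
  rw [integral_div, integral_add h (h.mul_exp_neg_of_even hJeven),
    integral_mul_exp_neg_of_even hJeven]
  ring

lemma integral_le_integral_mul_cosh (hJnonneg : ∀ x, 0 ≤ J x) {l : ℝ}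
    (h : Integrable fun x => J x * cosh (l * x)) :
    ∫ x, J x ≤ ∫ x, J x * cosh (l * x) :=
  integral_mono_of_nonneg (Eventually.of_forall hJnonneg) h
    (Eventually.of_forall fun x => le_mul_of_one_le_right (hJnonneg x) (one_le_cosh _))

lemma integral_mul_cosh_le (hJnonneg : ∀ x, 0 ≤ J x) (hJint : Integrable J)
    (h : Integrable fun x => J x * cosh x) {l : ℝ} (hl : |l| ≤ 1) :
    ∫ x, J x * cosh (l * x) ≤ (∫ x, J x) + l ^ 2 * ∫ x, J x * (cosh x - 1) := by
  have hsub : Integrable fun x => J x * (cosh x - 1) := by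
    simp_rw [mul_sub, mul_one]
    exact h.sub hJint
  rw [← integral_const_mul, ← integral_add hJint (hsub.const_mul _)]
  refine integral_mono_of_nonneg
    (Eventually.of_forall fun x => mul_nonneg (hJnonneg x) (cosh_pos _).le)
    (hJint.add (hsub.const_mul _)) (Eventually.of_forall fun x => ?_)
  have := mul_le_mul_of_nonneg_left (cosh_mul_sub_one_le hl x) (hJnonneg x)
  dsimp only
  nlinarith

end Kernel

lemma sInf_speed_mem_Icc {M : ℝ → ℝ} {C κ : ℝ} (hM_ge : ∀ l, 0 < l → 1 ≤ M l)
    (hM_le : ∀ l, 0 < l → l ≤ 1 → M l ≤ 1 + l ^ 2 * C) (hκ : 0 < κ) (hκ₁ : κ ≤ 1) :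
    sInf {v : ℝ | ∃ lam : ℝ, 0 < lam ∧ v = (1 / lam) * (M lam - 1 + κ)} ∈
      Icc 0 ((C + 1) * √κ) := by
  have hpos : ∀ v ∈ {v : ℝ | ∃ lam : ℝ, 0 < lam ∧ v = (1 / lam) * (M lam - 1 + κ)}, 0 ≤ v := by
    rintro v ⟨l, hl, rfl⟩
    have := hM_ge l hl
    positivity
  have hs : 0 < √κ := sqrt_pos.2 hκ
  refine ⟨le_csInf ⟨_, 1, one_pos, rfl⟩ hpos, (csInf_le ⟨0, hpos⟩ ⟨√κ, hs, rfl⟩).trans ?_⟩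
  have hM := hM_le √κ hs (sqrt_le_one.2 hκ₁)
  rw [sq_sqrt hκ.le] at hM
  rw [one_div_mul_eq_div, div_le_iff₀ hs, mul_assoc, mul_self_sqrt hκ.le]
  linarith

theorem stmt_1
    (J : ℝ → ℝ)
    (hJnonneg : ∀ x, 0 ≤ J x)
    (hJeven : ∀ x, J (-x) = J x)
    (hJint : Integrable J)
    (hJmass : ∫ x, J x = 1)
    (hJexp : ∀ lam : ℝ, 0 < lam → Integrable (fun x => J x * Real.exp (lam * x)))
    (c : ℝ → ℝ)
    (hc : ∀ κ : ℝ, 0 < κ →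
      c κ = sInf {v : ℝ | ∃ lam : ℝ, 0 < lam ∧
        v = (1 / lam) * ((∫ y, J y * Real.exp (lam * y)) - 1 + κ)}) :
    Tendsto c (nhdsWithin 0 (Ioi 0)) (nhds 0) := by
  have hcosh : ∀ l, 0 < l → Integrable fun y => J y * cosh (l * y) := fun l hl =>
    (hJexp l hl).mul_cosh_of_even hJeven
  have hM_ge : ∀ l, 0 < l → 1 ≤ ∫ y, J y * exp (l * y) := fun l hl => by
    rw [integral_mul_exp_eq_integral_mul_cosh hJeven (hJexp l hl), ← hJmass]
    exact integral_le_integral_mul_cosh hJnonneg (hcosh l hl)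
  have hM_le : ∀ l, 0 < l → l ≤ 1 →
      ∫ y, J y * exp (l * y) ≤ 1 + l ^ 2 * ∫ y, J y * (cosh y - 1) := fun l hl hl₁ => by
    rw [integral_mul_exp_eq_integral_mul_cosh hJeven (hJexp l hl)]
    refine (integral_mul_cosh_le hJnonneg hJint (by simpa using hcosh 1 one_pos)
      ((abs_of_pos hl).trans_le hl₁)).trans_eq ?_
    rw [hJmass]
  have hc_mem : ∀ᶠ κ in nhdsWithin 0 (Ioi 0),
      c κ ∈ Icc 0 (((∫ y, J y * (cosh y - 1)) + 1) * √κ) := by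
    filter_upwards [Ioc_mem_nhdsGT one_pos] with κ hκ
    rw [hc κ hκ.1]
    exact sInf_speed_mem_Icc hM_ge hM_le hκ.1 hκ.2
  have hsqrt : Tendsto (fun κ => ((∫ y, J y * (cosh y - 1)) + 1) * √κ)
      (nhdsWithin 0 (Ioi 0)) (nhds 0) := by
    simpa using ((continuous_sqrt.tendsto 0).const_mul _).mono_left nhdsWithin_le_nhds
  exact tendsto_of_tendsto_of_tendsto_of_le_of_le' tendsto_const_nhds hsqrt
    (hc_mem.mono fun _ h => h.1) (hc_mem.mono fun _ h => h.2)
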